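/- Let G be a group and let Δ and Σ be subgroups of G such that Σ normalizes Δ. Let r : Δ → G be a group homomorphism such that r(Δ) ⊆ Δ ∩ Σ, r(δ) = δ for all δ ∈ Δ ∩ Σ, and r(σδσ⁻¹) = σ r(δ) σ⁻¹ for all σ ∈ Σ and δ ∈ Δ. If both Δ and Σ are torsion-free, then the subgroup generated by Δ and Σ is torsion-free. -/

import Mathlib

/-- A monoid is torsion-free if its only element of finite order is the identity
(the definition `Monoid.IsTorsionFree` of the older Mathlib, since removed). -/
def Monoid.IsTorsionFree (G : Type*) [Monoid G] : Prop :=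
  ∀ g : G, g ≠ 1 → ¬IsOfFinOrder g

/-!
Since `S` normalizes `Δ`, every element of `Δ ⊔ S` factors as `δ * σ` with `δ ∈ Δ`, `σ ∈ S`, and
`δ * σ ↦ r δ * σ` is a homomorphism on `Δ ⊔ S` with values in `S`: it is well defined because `r`
fixes `Δ ⊓ S`, and multiplicative because `r` commutes with conjugation by `S`. An element `δ * σ`
of finite order is therefore sent to an element of finite order of `S`, so `r δ * σ = 1`. Then
`σ = (r δ)⁻¹ ∈ Δ`, so `δ * σ` is an element of finite order of `Δ`, hence trivial.
-/

namespace Subgroup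

variable {G : Type*} [Group G] {H Δ S : Subgroup G}

theorem eq_one_of_isOfFinOrder (hH : Monoid.IsTorsionFree H) {g : G} (hg : g ∈ H)
    (hfin : IsOfFinOrder g) : g = 1 := by
  by_contra hne
  exact hH ⟨g, hg⟩ (by simpa using hne) (Submonoid.isOfFinOrder_coe.mp hfin)

theorem exists_mul_eq_of_mem_sup (hnorm : S ≤ normalizer (Δ : Set G)) {x : G}
    (hx : x ∈ Δ ⊔ S) : ∃ δ : Δ, ∃ σ ∈ S, (δ : G) * σ = x := by
  rw [← SetLike.mem_coe, coe_mul_of_right_le_normalizer_left Δ S hnorm] at hx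
  obtain ⟨δ, hδ, σ, hσ, rfl⟩ := hx
  exact ⟨⟨δ, hδ⟩, σ, hσ, rfl⟩

section LiftSup

variable (r : Δ →* G)

theorem map_mul_eq_of_mul_eq (hid : ∀ δ : Δ, (δ : G) ∈ S → r δ = δ) {δ₁ δ₂ : Δ} {σ₁ σ₂ : G}
    (hσ₁ : σ₁ ∈ S) (hσ₂ : σ₂ ∈ S) (h : (δ₁ : G) * σ₁ = δ₂ * σ₂) : r δ₁ * σ₁ = r δ₂ * σ₂ := by
  have hquot : ((δ₂⁻¹ * δ₁ : Δ) : G) = σ₂ * σ₁⁻¹ := by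
    rw [coe_mul, coe_inv, inv_mul_eq_iff_eq_mul, ← mul_assoc, ← h, mul_inv_cancel_right]
  have hfix := hid _ (hquot ▸ mul_mem hσ₂ (inv_mem hσ₁))
  rw [map_mul, map_inv, hquot, inv_mul_eq_iff_eq_mul] at hfix
  rw [hfix, mul_assoc, mul_assoc, inv_mul_cancel, mul_one]

theorem map_mul_eq_mul_of_mul_eq (hnorm : S ≤ normalizer (Δ : Set G))
    (hid : ∀ δ : Δ, (δ : G) ∈ S → r δ = δ)
    (hconj : ∀ σ : G, σ ∈ S → ∀ (δ : Δ) (h : σ * (δ : G) * σ⁻¹ ∈ Δ),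
      r ⟨σ * (δ : G) * σ⁻¹, h⟩ = σ * r δ * σ⁻¹)
    {δ₁ δ₂ δ₃ : Δ} {σ₁ σ₂ σ₃ : G} (hσ₁ : σ₁ ∈ S) (hσ₂ : σ₂ ∈ S) (hσ₃ : σ₃ ∈ S)
    (h : (δ₁ : G) * σ₁ * (δ₂ * σ₂) = δ₃ * σ₃) :
    r δ₃ * σ₃ = r δ₁ * σ₁ * (r δ₂ * σ₂) := by
  have hmem : σ₁ * (δ₂ : G) * σ₁⁻¹ ∈ Δ := (mem_normalizer_iff.mp (hnorm hσ₁) δ₂).mp δ₂.2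
  have hfactor : ((δ₁ * ⟨_, hmem⟩ : Δ) : G) * (σ₁ * σ₂) = δ₃ * σ₃ := by
    rw [← h, coe_mul]
    group
  rw [← map_mul_eq_of_mul_eq r hid (mul_mem hσ₁ hσ₂) hσ₃ hfactor, map_mul, hconj σ₁ hσ₁ δ₂ hmem]
  group

/-- The homomorphism `δ * σ ↦ r δ * σ` on `Δ ⊔ S`. -/
noncomputable def liftSup (hnorm : S ≤ normalizer (Δ : Set G))
    (hid : ∀ δ : Δ, (δ : G) ∈ S → r δ = δ)
    (hconj : ∀ σ : G, σ ∈ S → ∀ (δ : Δ) (h : σ * (δ : G) * σ⁻¹ ∈ Δ),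
      r ⟨σ * (δ : G) * σ⁻¹, h⟩ = σ * r δ * σ⁻¹) :
    (Δ ⊔ S : Subgroup G) →* G :=
  MonoidHom.mk'
    (fun x ↦ r (exists_mul_eq_of_mem_sup hnorm x.2).choose *
      (exists_mul_eq_of_mem_sup hnorm x.2).choose_spec.choose)
    (fun x y ↦ by
      obtain ⟨hσx, hx⟩ := (exists_mul_eq_of_mem_sup hnorm x.2).choose_spec.choose_spec
      obtain ⟨hσy, hy⟩ := (exists_mul_eq_of_mem_sup hnorm y.2).choose_spec.choose_spec
      obtain ⟨hσxy, hxy⟩ := (exists_mul_eq_of_mem_sup hnorm (x * y).2).choose_spec.choose_spec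
      refine map_mul_eq_mul_of_mul_eq r hnorm hid hconj hσx hσy hσxy ?_
      rw [hx, hy, hxy, coe_mul])

theorem liftSup_apply_of_mul_eq (hnorm : S ≤ normalizer (Δ : Set G))
    (hid : ∀ δ : Δ, (δ : G) ∈ S → r δ = δ)
    (hconj : ∀ σ : G, σ ∈ S → ∀ (δ : Δ) (h : σ * (δ : G) * σ⁻¹ ∈ Δ),
      r ⟨σ * (δ : G) * σ⁻¹, h⟩ = σ * r δ * σ⁻¹)
    {x : (Δ ⊔ S : Subgroup G)} {δ : Δ} {σ : G} (hσ : σ ∈ S) (h : (δ : G) * σ = x) :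
    liftSup r hnorm hid hconj x = r δ * σ := by
  obtain ⟨hσx, hx⟩ := (exists_mul_eq_of_mem_sup hnorm x.2).choose_spec.choose_spec
  exact map_mul_eq_of_mul_eq r hid hσx hσ (hx.trans h.symm)

end LiftSup

end Subgroup

theorem join_isTorsionFree {G : Type*} [Group G] (Δ S : Subgroup G)
    (hnorm : S ≤ Subgroup.normalizer (Δ : Set G))
    (r : Δ →* G)
    (hrange : ∀ δ : Δ, r δ ∈ Δ ⊓ S)
    (hid : ∀ δ : Δ, (δ : G) ∈ S → r δ = (δ : G))
    (hconj : ∀ σ : G, σ ∈ S → ∀ (δ : Δ) (h : σ * (δ : G) * σ⁻¹ ∈ Δ),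
      r ⟨σ * (δ : G) * σ⁻¹, h⟩ = σ * r δ * σ⁻¹)
    (hΔ : Monoid.IsTorsionFree Δ) (hS : Monoid.IsTorsionFree S) :
    Monoid.IsTorsionFree (Δ ⊔ S : Subgroup G) := by
  intro g hg hfin
  obtain ⟨δ, σ, hσ, hδσ⟩ := Subgroup.exists_mul_eq_of_mem_sup hnorm g.2
  have hlift := Subgroup.liftSup_apply_of_mul_eq r hnorm hid hconj hσ hδσ
  have hlift_one : r δ * σ = 1 := by
    rw [← hlift]
    refine Subgroup.eq_one_of_isOfFinOrder hS ?_ (MonoidHom.isOfFinOrder _ hfin)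
    exact hlift ▸ mul_mem (hrange δ).2 hσ
  have hσΔ : σ ∈ Δ := by
    rw [eq_inv_of_mul_eq_one_right hlift_one]
    exact inv_mem (hrange δ).1
  have hgΔ : (g : G) ∈ Δ := hδσ ▸ mul_mem δ.2 hσΔ
  exact hg <| Subtype.ext <|
    Subgroup.eq_one_of_isOfFinOrder hΔ hgΔ (Submonoid.isOfFinOrder_coe.mpr hfin)
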